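/- Let V be a finite set and let f, g : 2^V × 2^V → 2^V be monotone (with respect to inclusion) in both arguments, and assume g(X, Y) ⊆ f(X, Y) for all X, Y ⊆ V. Define Z_a := νY_a. μX_a. νY_b. μX_b. ( f(X_a, Y_a) ∪ g(X_b, Y_b) ), Z_b := νY_a. μX_a. νY_b. μX_b. ( g(X_a, Y_a) ∪ f(X_b, Y_b) ), and Z_c := νY_c. μX_c. f(X_c, Y_c). Then Z_a = Z_c and Z_b = Z_c. -/
import Mathlib


/-- Least fixed point of a set transformer (Knaster–Tarski form). -/
def lfpSet {V : Type*} (f : Set V → Set V) : Set V := sInf {X | f X ⊆ X}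

/-- Greatest fixed point of a set transformer (Knaster–Tarski form). -/
def gfpSet {V : Type*} (f : Set V → Set V) : Set V := sSup {X | X ⊆ f X}

section Helpers

variable {V : Type*}

lemma lfpSet_le {f : Set V → Set V} {p : Set V} (h : f p ⊆ p) : lfpSet f ⊆ p := sInf_le h

lemma le_gfpSet {f : Set V → Set V} {p : Set V} (h : p ⊆ f p) : p ⊆ gfpSet f := le_sSup h

lemma map_lfpSet {f : Set V → Set V} (hm : Monotone f) : f (lfpSet f) = lfpSet f := by
  have h1 : f (lfpSet f) ⊆ lfpSet f :=
    le_sInf fun X hX => (hm (sInf_le hX)).trans hX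
  exact h1.antisymm (lfpSet_le (hm h1))

lemma map_gfpSet {f : Set V → Set V} (hm : Monotone f) : f (gfpSet f) = gfpSet f := by
  have h1 : gfpSet f ⊆ f (gfpSet f) :=
    sSup_le fun X hX => hX.trans (hm (le_sSup hX))
  exact (le_gfpSet (hm h1)).antisymm h1

lemma lfpSet_mono {f g : Set V → Set V} (h : ∀ X, f X ⊆ g X) : lfpSet f ⊆ lfpSet g :=
  sInf_le_sInf fun X hX => Set.Subset.trans (h X) hX

lemma gfpSet_mono {f g : Set V → Set V} (h : ∀ X, f X ⊆ g X) : gfpSet f ⊆ gfpSet g :=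
  sSup_le_sSup fun X hX => Set.Subset.trans hX (h X)

end Helpers

section Main

variable {V : Type*} (f g : Set V → Set V → Set V)

/-- The inner double fixpoint, as a function of the two outer variables. -/
private def Hfun (Y Xa : Set V) : Set V :=
  gfpSet fun Yb => lfpSet fun Xb => f Xa Y ∪ g Xb Yb

/-- The functional of the outer gfp for `Z_a`. -/
private def PhiA (Y : Set V) : Set V := lfpSet (Hfun f g Y)

/-- The functional of the outer gfp for `Z_c`. -/
private def PhiC (Y : Set V) : Set V := lfpSet fun X => f X Y

variable (hf : ∀ ⦃X₁ X₂ Y₁ Y₂ : Set V⦄, X₁ ⊆ X₂ → Y₁ ⊆ Y₂ → f X₁ Y₁ ⊆ f X₂ Y₂)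
variable (hg : ∀ ⦃X₁ X₂ Y₁ Y₂ : Set V⦄, X₁ ⊆ X₂ → Y₁ ⊆ Y₂ → g X₁ Y₁ ⊆ g X₂ Y₂)
variable (hgf : ∀ X Y : Set V, g X Y ⊆ f X Y)

include hf in
private lemma Hfun_mono ⦃Y₁ Y₂ Xa₁ Xa₂ : Set V⦄ (hY : Y₁ ⊆ Y₂) (hXa : Xa₁ ⊆ Xa₂) :
    Hfun f g Y₁ Xa₁ ⊆ Hfun f g Y₂ Xa₂ :=
  gfpSet_mono fun _Yb => lfpSet_mono fun _Xb =>
    Set.union_subset_union (hf hXa hY) subset_rfl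

include hf in
private lemma PhiA_mono : Monotone (PhiA f g) :=
  fun _ _ h => lfpSet_mono fun _Xa => Hfun_mono f g hf h subset_rfl

include hf in
private lemma PhiC_mono : Monotone (PhiC f) :=
  fun _ _ h => lfpSet_mono fun _X => hf subset_rfl h

include hg in
private lemma innerYb_mono (Xa Y : Set V) :
    Monotone fun Yb => lfpSet fun Xb => f Xa Y ∪ g Xb Yb :=
  fun _ _ h => lfpSet_mono fun _Xb =>
    Set.union_subset_union subset_rfl (hg subset_rfl h)

include hg in
private lemma innerXb_mono (Xa Y Yb : Set V) :
    Monotone fun Xb => f Xa Y ∪ g Xb Yb :=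
  fun _ _ h => Set.union_subset_union subset_rfl (hg h subset_rfl)

include hg in
/-- The inner double fixpoint, evaluated at any `Xa`, contains `f Xa Y`. -/
private lemma f_subset_Hfun (Y Xa : Set V) : f Xa Y ⊆ Hfun f g Y Xa := by
  have hfix : (fun Yb => lfpSet fun Xb => f Xa Y ∪ g Xb Yb) (Hfun f g Y Xa)
      = Hfun f g Y Xa := map_gfpSet (innerYb_mono f g hg Xa Y)
  have hfix2 : (fun Xb => f Xa Y ∪ g Xb (Hfun f g Y Xa))
      (lfpSet fun Xb => f Xa Y ∪ g Xb (Hfun f g Y Xa))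
      = lfpSet fun Xb => f Xa Y ∪ g Xb (Hfun f g Y Xa) :=
    map_lfpSet (innerXb_mono f g hg Xa Y (Hfun f g Y Xa))
  calc f Xa Y
      ⊆ (fun Xb => f Xa Y ∪ g Xb (Hfun f g Y Xa))
        (lfpSet fun Xb => f Xa Y ∪ g Xb (Hfun f g Y Xa)) := Set.subset_union_left
    _ = lfpSet fun Xb => f Xa Y ∪ g Xb (Hfun f g Y Xa) := hfix2
    _ = Hfun f g Y Xa := hfix

include hf hg in
/-- Pointwise: `PhiC ≤ PhiA`. -/
private lemma PhiC_le_PhiA (Y : Set V) : PhiC f Y ⊆ PhiA f g Y := by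
  have hW : Hfun f g Y (PhiA f g Y) = PhiA f g Y :=
    map_lfpSet (fun _ _ h => Hfun_mono f g hf subset_rfl h)
  have hkey : f (PhiA f g Y) Y ⊆ PhiA f g Y :=
    (f_subset_Hfun f g hg Y (PhiA f g Y)).trans hW.subset
  exact lfpSet_le hkey

include hf hg hgf in
/-- The main lemma: `Z_a = Z_c`. -/
private lemma main_eq :
    (gfpSet fun Ya => lfpSet fun Xa => gfpSet fun Yb => lfpSet fun Xb =>
      f Xa Ya ∪ g Xb Yb) = gfpSet fun Yc => lfpSet fun Xc => f Xc Yc := by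
  show gfpSet (PhiA f g) = gfpSet (PhiC f)
  apply Set.Subset.antisymm
  · -- Za ⊆ Zc
    set Za := gfpSet (PhiA f g) with hZa
    set T := PhiC f Za with hT
    have hZafix : PhiA f g Za = Za := map_gfpSet (PhiA_mono f g hf)
    have hTZa : T ⊆ Za := (PhiC_le_PhiA f g hf hg Za).trans hZafix.subset
    have hHZaZa : Hfun f g Za Za = Za := by
      have := map_lfpSet (f := Hfun f g Za) (fun _ _ h => Hfun_mono f g hf subset_rfl h)
      calc Hfun f g Za Za = Hfun f g Za (PhiA f g Za) := by rw [hZafix]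
        _ = PhiA f g Za := this
        _ = Za := hZafix
    have hNZa : Hfun f g Za T ⊆ Za :=
      (Hfun_mono f g hf subset_rfl hTZa).trans hHZaZa.subset
    have hTfix : f T Za ⊆ T := by
      have : (fun X => f X Za) (lfpSet fun X => f X Za) = lfpSet fun X => f X Za :=
        map_lfpSet (fun _ _ h => hf h subset_rfl)
      exact this.subset
    have hNfix : lfpSet (fun Xb => f T Za ∪ g Xb (Hfun f g Za T)) = Hfun f g Za T :=
      map_gfpSet (innerYb_mono f g hg T Za)
    have hNT : Hfun f g Za T ⊆ T := by
      rw [← hNfix]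
      apply lfpSet_le
      apply Set.union_subset hTfix
      exact ((hgf T (Hfun f g Za T)).trans ((hf subset_rfl hNZa).trans hTfix))
    have hZaT : Za ⊆ T := by
      have : PhiA f g Za ⊆ T := lfpSet_le hNT
      exact hZafix.symm.subset.trans this
    exact le_gfpSet hZaT
  · -- Zc ⊆ Za
    set Zc := gfpSet (PhiC f) with hZc
    have hZcfix : PhiC f Zc = Zc := map_gfpSet (PhiC_mono f hf)
    exact le_gfpSet (hZcfix.symm.subset.trans (PhiC_le_PhiA f g hf hg Zc))

end Main

/-- if additionally g ⊆ f pointwise, then Z_a = Z_c and Z_b = Z_c. -/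
theorem nested_fixpoint_eq {V : Type*} [Fintype V]
    (f g : Set V → Set V → Set V)
    (hf : ∀ ⦃X₁ X₂ Y₁ Y₂ : Set V⦄, X₁ ⊆ X₂ → Y₁ ⊆ Y₂ → f X₁ Y₁ ⊆ f X₂ Y₂)
    (hg : ∀ ⦃X₁ X₂ Y₁ Y₂ : Set V⦄, X₁ ⊆ X₂ → Y₁ ⊆ Y₂ → g X₁ Y₁ ⊆ g X₂ Y₂)
    (hgf : ∀ X Y : Set V, g X Y ⊆ f X Y)
    (Za Zb Zc : Set V)
    (hZa : Za = gfpSet fun Ya => lfpSet fun Xa => gfpSet fun Yb => lfpSet fun Xb =>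
      f Xa Ya ∪ g Xb Yb)
    (hZb : Zb = gfpSet fun Ya => lfpSet fun Xa => gfpSet fun Yb => lfpSet fun Xb =>
      g Xa Ya ∪ f Xb Yb)
    (hZc : Zc = gfpSet fun Yc => lfpSet fun Xc => f Xc Yc) :
    Za = Zc ∧ Zb = Zc := by
  subst hZa hZb hZc
  constructor
  · exact main_eq f g hf hg hgf
  · apply Set.Subset.antisymm
    · -- Zb ⊆ Zf = Zc
      have hZf : (gfpSet fun Ya => lfpSet fun Xa => gfpSet fun Yb => lfpSet fun Xb =>
          f Xa Ya ∪ f Xb Yb) = gfpSet fun Yc => lfpSet fun Xc => f Xc Yc :=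
        main_eq f f hf hf (fun _ _ => subset_rfl)
      rw [← hZf]
      exact gfpSet_mono fun Ya => lfpSet_mono fun Xa => gfpSet_mono fun Yb =>
        lfpSet_mono fun Xb => Set.union_subset_union (hgf Xa Ya) subset_rfl
    · -- Zc ⊆ Zb
      set Zc := gfpSet fun Yc => lfpSet fun Xc => f Xc Yc with hZcdef
      apply le_gfpSet
      -- goal: Zc ⊆ lfpSet fun Xa => gfpSet fun Yb => lfpSet fun Xb => g Xa Zc ∪ f Xb Yb
      have hHb_mono : Monotone fun Xa => gfpSet fun Yb => lfpSet fun Xb =>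
          g Xa Zc ∪ f Xb Yb :=
        fun _ _ h => gfpSet_mono fun _Yb => lfpSet_mono fun _Xb =>
          Set.union_subset_union (hg h subset_rfl) subset_rfl
      have hfix := map_lfpSet hHb_mono
      have hZc_le : ∀ Xa : Set V, Zc ⊆ gfpSet fun Yb => lfpSet fun Xb =>
          g Xa Zc ∪ f Xb Yb := by
        intro Xa
        exact gfpSet_mono fun Yb => lfpSet_mono fun Xb => Set.subset_union_right
      exact (hZc_le _).trans hfix.subset
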